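/- arXiv:2507.00047 — 4 statements merged into one kernel-verified Lean document; each statement's English description precedes it below -/
import Mathlib

section
/- If (a, b) is an improving pair for a perfect matching σ, then the improved matching σ' satisfies p(σ') > p(σ) in the lexicographic order. -/
/-- If `f j ≤ g j` for all `j ≤ i` and `f i < g i`, then `f < g` lexicographically. -/
lemma lex_lt_of_le_of_lt {r : ℕ} {f g : Fin r → ℕ} (i : Fin r)
    (hle : ∀ j, j ≤ i → f j ≤ g j) (hlt : f i < g i) : toLex f < toLex g := by
  classical
  set s : Finset (Fin r) := Finset.univ.filter (fun j => f j < g j) with hs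
  have hi : i ∈ s := by simp [hs, hlt]
  have hne : s.Nonempty := ⟨i, hi⟩
  set j := s.min' hne with hj
  have hjs : j ∈ s := s.min'_mem hne
  have hji : j ≤ i := s.min'_le i hi
  refine ⟨j, fun k hk => ?_, ?_⟩
  · have hks : k ∉ s := fun h => absurd (s.min'_le k h) (not_le.2 hk)
    have : ¬ f k < g k := by simpa [hs] using hks
    exact le_antisymm (hle k (le_of_lt (lt_of_lt_of_le hk hji))) (not_lt.1 this)
  · simpa [hs] using hjs

/-- if `(a, b)` is an improving pair for a perfect matching `σ`
(a bijection `A ≃ B`), then the improved matching `σ.trans (Equiv.swap (σ a) b)`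
has a lexicographically greater profile. -/
theorem improved_profile_gt {A B : Type*} [Fintype A] [Fintype B] [DecidableEq B]
    (r : ℕ) (u : Fin r → A × B → ℕ) (σ : A ≃ B) (a : A) (b : B)
    (hab : b ≠ σ a)
    (himp : toLex (fun i => u i (a, σ a) + u i (σ.symm b, b)) <
      toLex (fun i => u i (a, b))) :
    toLex (fun i => ∑ x : A, u i (x, σ x)) <
      toLex (fun i => ∑ x : A, u i (x, (σ.trans (Equiv.swap (σ a) b)) x)) := by
  classical
  set σ' : A ≃ B := σ.trans (Equiv.swap (σ a) b) with hσ'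
  have hba : σ.symm b ≠ a := fun h => hab (by simpa using congrArg σ h)
  have hσ'a : σ' a = b := by simp [hσ']
  have hσ'b : σ' (σ.symm b) = σ a := by simp [hσ', Equiv.swap_apply_of_ne_of_ne, hab]
  have hσ'x : ∀ x, x ≠ a → x ≠ σ.symm b → σ' x = σ x := by
    intro x hx1 hx2
    have h1 : σ x ≠ σ a := fun h => hx1 (σ.injective h)
    have h2 : σ x ≠ b := fun h => hx2 (by simp [← h])
    simp [hσ', Equiv.swap_apply_of_ne_of_ne h1 h2]
  -- decompose sums
  set s : Finset A := (Finset.univ.erase a).erase (σ.symm b) with hs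
  have hmem1 : a ∈ (Finset.univ : Finset A) := Finset.mem_univ a
  have hmem2 : σ.symm b ∈ Finset.univ.erase a := Finset.mem_erase.2 ⟨hba, Finset.mem_univ _⟩
  have hsplit : ∀ f : A → ℕ,
      ∑ x : A, f x = (∑ x ∈ s, f x) + (f a + f (σ.symm b)) := by
    intro f
    rw [← Finset.add_sum_erase _ f hmem1, ← Finset.add_sum_erase _ f hmem2, ← hs]
    ring
  have hold : ∀ i, ∑ x : A, u i (x, σ x)
      = (∑ x ∈ s, u i (x, σ x)) + (u i (a, σ a) + u i (σ.symm b, b)) := by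
    intro i
    simpa using hsplit (fun x => u i (x, σ x))
  have hnew : ∀ i, ∑ x : A, u i (x, σ' x)
      = (∑ x ∈ s, u i (x, σ x)) + (u i (a, b) + u i (σ.symm b, σ a)) := by
    intro i
    rw [hsplit (fun x => u i (x, σ' x)), hσ'a, hσ'b]
    congr 1
    refine Finset.sum_congr rfl fun x hx => ?_
    rw [hσ'x x (Finset.mem_erase.1 (Finset.mem_erase.1 hx).2).1 (Finset.mem_erase.1 hx).1]
  obtain ⟨i, heq, hlt⟩ := himp
  simp only [Pi.toLex_apply] at heq hlt
  refine lex_lt_of_le_of_lt i (fun j hj => ?_) ?_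
  · rcases lt_or_eq_of_le hj with hj | hj
    · rw [hold j, hnew j, heq j hj]
      exact Nat.add_le_add_left (Nat.le_add_right _ _) _
    · subst hj
      rw [hold j, hnew j]
      exact Nat.add_le_add_left (le_trans hlt.le (Nat.le_add_right _ _)) _
  · rw [hold i, hnew i]
    exact Nat.add_lt_add_left (lt_of_lt_of_le hlt (Nat.le_add_right _ _)) _
end

section
/- Let w : A × B → ℕ be a weight function such that for all a, a' ∈ A and b, b' ∈ B, if p({(a, b)}) > p({(a, b'), (a', b)}) in the lexicographic order then w((a, b)) > w((a, b')) + w((a', b)). If (a, b) is an improving pair for a perfect matching σ, then the improved matching σ' has strictly greater total weight: ∑_{x∈A} w((x, σ'(x))) > ∑_{x∈A} w((x, σ(x))). In particular, a perfect matching of maximum total weight admits no improving pair. -/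
/-- for a weight function `w` satisfying the improving-pair condition,
improving a perfect matching strictly increases its total weight; in particular a
maximum-weight perfect matching admits no improving pair. -/
theorem improve_increases_weight {A B : Type*} [Fintype A] [Fintype B] [DecidableEq B]
    (r : ℕ) (u : Fin r → A × B → ℕ) (w : A × B → ℕ)
    (hw : ∀ (a a' : A) (b b' : B),
      toLex (fun i => u i (a, b') + u i (a', b)) < toLex (fun i => u i (a, b)) →
      w (a, b') + w (a', b) < w (a, b)) :
    (∀ (σ : A ≃ B) (a : A) (b : B), b ≠ σ a →
      toLex (fun i => u i (a, σ a) + u i (σ.symm b, b)) < toLex (fun i => u i (a, b)) →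
      ∑ x : A, w (x, σ x) < ∑ x : A, w (x, (σ.trans (Equiv.swap (σ a) b)) x)) ∧
    (∀ σ : A ≃ B, (∀ τ : A ≃ B, ∑ x : A, w (x, τ x) ≤ ∑ x : A, w (x, σ x)) →
      ¬ ∃ (a : A) (b : B), b ≠ σ a ∧
        toLex (fun i => u i (a, σ a) + u i (σ.symm b, b)) <
          toLex (fun i => u i (a, b))) := by
  classical
  have main : ∀ (σ : A ≃ B) (a : A) (b : B), b ≠ σ a →
      toLex (fun i => u i (a, σ a) + u i (σ.symm b, b)) < toLex (fun i => u i (a, b)) →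
      ∑ x : A, w (x, σ x) < ∑ x : A, w (x, (σ.trans (Equiv.swap (σ a) b)) x) := by
    intro σ a b hne hlt
    set a' := σ.symm b with ha'
    have hb : σ a' = b := σ.apply_symm_apply b
    have haa' : a ≠ a' := by
      intro h
      exact hne (by rw [h, hb])
    have key := hw a a' b (σ a) hlt
    have hσ'a : (σ.trans (Equiv.swap (σ a) b)) a = b := by
      simp [Equiv.trans_apply, Equiv.swap_apply_left]
    have hσ'a' : (σ.trans (Equiv.swap (σ a) b)) a' = σ a := by
      simp [Equiv.trans_apply, hb, Equiv.swap_apply_right]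
    have hrest : ∀ x, x ≠ a → x ≠ a' → (σ.trans (Equiv.swap (σ a) b)) x = σ x := by
      intro x hx hx'
      simp only [Equiv.trans_apply]
      apply Equiv.swap_apply_of_ne_of_ne
      · exact fun h => hx (σ.injective h)
      · intro h
        exact hx' (σ.injective (by rw [hb, h]))
    rw [← Finset.sum_add_sum_compl ({a, a'} : Finset A) (fun x => w (x, σ x)),
       ← Finset.sum_add_sum_compl ({a, a'} : Finset A)
         (fun x => w (x, (σ.trans (Equiv.swap (σ a) b)) x))]
    have h2 : ∑ x ∈ ({a, a'} : Finset A)ᶜ, w (x, σ x)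
        = ∑ x ∈ ({a, a'} : Finset A)ᶜ, w (x, (σ.trans (Equiv.swap (σ a) b)) x) := by
      refine Finset.sum_congr rfl ?_
      intro x hx
      simp only [Finset.mem_compl, Finset.mem_insert, Finset.mem_singleton, not_or] at hx
      rw [hrest x hx.1 hx.2]
    rw [Finset.sum_pair haa', Finset.sum_pair haa', hσ'a, hσ'a', ← h2]
    have h0 : 0 ≤ w (a', σ a) := Nat.zero_le _
    have h3 : w (a', σ a') = w (a', b) := by rw [hb]
    omega
  refine ⟨main, ?_⟩
  rintro σ hmax ⟨a, b, hne, hlt⟩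
  exact absurd (hmax (σ.trans (Equiv.swap (σ a) b))) (not_le.mpr (main σ a b hne hlt))
end

section
/- Let U_1, …, U_r ∈ ℕ and suppose u_i(e) ≤ U_i for all e ∈ A × B and 1 ≤ i ≤ r. Define the mixed-radix weight function w_mixed(e) = ∑_{i=1}^{r} u_i(e) · ∏_{j=i+1}^{r} (2U_j + 1). Then for all a, a' ∈ A and b, b' ∈ B: if p({(a, b)}) > p({(a, b'), (a', b)}) in the lexicographic order, then w_mixed((a, b)) > w_mixed((a, b')) + w_mixed((a', b)). -/
/-!
Read `u (a, b)` and `u (a, b') + u (a', b)` as digit vectors in the mixed radix with bases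
`2 * U i + 1`; the latter has digits at most `2 * U i`. With place values
`P i = ∏_{j > i} (2 * U j + 1)`, the identity `∑_{j > i} 2 U_j P_j + 1 = P_i` says that everything
below the first digit where the two vectors differ weighs less than one unit of that digit, so the
weight order agrees with the lexicographic order.
-/

open Finset

section PlaceValue

variable {ι : Type*} [LinearOrder ι] [LocallyFiniteOrderTop ι]

def placeValue {R : Type*} [CommSemiring R] (c : ι → R) (i : ι) : R :=
  ∏ j ∈ Ioi i, (c j + 1)

theorem sum_Ioi_mul_placeValue_add_one {R : Type*} [CommSemiring R] (c : ι → R) (i : ι) :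
    ∑ j ∈ Ioi i, c j * placeValue c j + 1 = placeValue c i := by
  have h : ∏ k ∈ Ioi i, (1 + c k) = 1 + ∑ j ∈ Ioi i, c j * ∏ k ∈ Ioi i with j < k, (1 + c k) :=
    prod_one_add_ordered (ι := ιᵒᵈ) _ c
  have hfilter : ∀ j ∈ Ioi i, {k ∈ Ioi i | j < k} = Ioi j := fun j hj => by
    ext k
    simp only [mem_filter, mem_Ioi] at hj ⊢
    exact ⟨fun hk => hk.2, fun hk => ⟨hj.trans hk, hk⟩⟩
  rw [sum_congr rfl fun j hj => by rw [hfilter j hj]] at h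
  simp only [placeValue, add_comm _ (1 : R)] at h ⊢
  exact h.symm

theorem sum_Ioi_mul_placeValue_lt {c v : ι → ℕ} {i : ι} (hv : ∀ j > i, v j ≤ c j) :
    ∑ j ∈ Ioi i, v j * placeValue c j < placeValue c i :=
  calc ∑ j ∈ Ioi i, v j * placeValue c j
      ≤ ∑ j ∈ Ioi i, c j * placeValue c j :=
        sum_le_sum fun j hj => Nat.mul_le_mul_right _ (hv j (mem_Ioi.mp hj))
    _ < placeValue c i := by
        rw [← sum_Ioi_mul_placeValue_add_one c i]
        exact Nat.lt_succ_self _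

theorem Finset.sum_univ_eq_sum_Iio_add_add_sum_Ioi [Fintype ι] [LocallyFiniteOrderBot ι]
    {M : Type*} [AddCommMonoid M] (f : ι → M) (i : ι) :
    ∑ j, f j = ∑ j ∈ Iio i, f j + (f i + ∑ j ∈ Ioi i, f j) := by
  rw [← sum_filter_add_sum_filter_not univ (· < i), filter_gt_eq_Iio, add_sum_Ioi_eq_sum_Ici]
  simp only [not_lt, filter_le_eq_Ici]

theorem sum_mul_placeValue_lt_of_toLex_lt [Fintype ι] [LocallyFiniteOrderBot ι]
    {c v t : ι → ℕ} (hv : ∀ j, v j ≤ c j) (h : toLex v < toLex t) :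
    ∑ j, v j * placeValue c j < ∑ j, t j * placeValue c j := by
  obtain ⟨i, hprefix, hi⟩ := h
  rw [sum_univ_eq_sum_Iio_add_add_sum_Ioi _ i, sum_univ_eq_sum_Iio_add_add_sum_Ioi _ i]
  have hprefix_eq : ∑ j ∈ Iio i, v j * placeValue c j = ∑ j ∈ Iio i, t j * placeValue c j :=
    sum_congr rfl fun j hj => congrArg (· * placeValue c j) (hprefix j (mem_Iio.mp hj))
  have htail := sum_Ioi_mul_placeValue_lt (i := i) fun j _ => hv j
  have hdigit : v i * placeValue c i + placeValue c i ≤ t i * placeValue c i := by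
    rw [← Nat.succ_mul]
    exact Nat.mul_le_mul_right _ hi
  omega

end PlaceValue

/-- the mixed-radix weight function with bases `2 * U i + 1`
satisfies the improving-pair weight condition. -/
theorem mixed_radix_weight_condition {A B : Type*}
    (r : ℕ) (u : Fin r → A × B → ℕ) (U : Fin r → ℕ)
    (hU : ∀ (i : Fin r) (e : A × B), u i e ≤ U i)
    (w : A × B → ℕ)
    (hw : ∀ e : A × B, w e = ∑ i, u i e * ∏ j ∈ Finset.Ioi i, (2 * U j + 1)) :
    ∀ (a a' : A) (b b' : B),
      toLex (fun i => u i (a, b') + u i (a', b)) < toLex (fun i => u i (a, b)) →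
      w (a, b') + w (a', b) < w (a, b) := by
  intro a a' b b' h
  have hpair : w (a, b') + w (a', b) =
      ∑ i, (u i (a, b') + u i (a', b)) * placeValue (fun j => 2 * U j) i := by
    simp only [hw, placeValue, add_mul, sum_add_distrib]
  have hdigits : ∀ i, u i (a, b') + u i (a', b) ≤ 2 * U i := fun i => by
    have := hU i (a, b'); have := hU i (a', b); omega
  rw [hpair, hw]
  exact sum_mul_placeValue_lt_of_toLex_lt hdigits h
end

section
/- Let r ≥ 1 and let rank : A × B → {1, …, r}. For 1 ≤ i ≤ r define the rank-maximal utility functions u_i(e) = 1 if rank(e) = i and u_i(e) = 0 otherwise, and define the weight function w_RM(e) = 2^{r − rank(e) + 1} − 1. Then for all a, a' ∈ A and b, b' ∈ B: if p({(a, b)}) > p({(a, b'), (a', b)}) in the lexicographic order, then w_RM((a, b)) > w_RM((a, b')) + w_RM((a', b)). -/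
/-- the rank-maximal weight function `w_RM(e) = 2^(r - rank e + 1) - 1`
satisfies the improving-pair weight condition for the rank-maximal utility
functions `u i e = 1` if `rank e = i + 1` and `0` otherwise (`i : Fin r`
corresponding to rank `i + 1`). -/
theorem rank_maximal_weight_condition {A B : Type*}
    (r : ℕ) (hr : 1 ≤ r) (rank : A × B → ℕ)
    (hrank : ∀ e : A × B, 1 ≤ rank e ∧ rank e ≤ r)
    (u : Fin r → A × B → ℕ)
    (hu : ∀ (i : Fin r) (e : A × B), u i e = if rank e = (i : ℕ) + 1 then 1 else 0)
    (w : A × B → ℕ)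
    (hw : ∀ e : A × B, w e = 2 ^ (r - rank e + 1) - 1) :
    ∀ (a a' : A) (b b' : B),
      toLex (fun i => u i (a, b') + u i (a', b)) < toLex (fun i => u i (a, b)) →
      w (a, b') + w (a', b) < w (a, b) := by
  intro a a' b b' h
  obtain ⟨i, hj, hi⟩ := h
  simp only [Pi.toLex_apply, hu] at hj hi
  set x := rank (a, b) with hx
  set y := rank (a, b') with hy
  set z := rank (a', b) with hz
  -- at i, RHS must be 1, LHS 0
  have hxi : x = (i : ℕ) + 1 := by
    by_contra hc
    simp [hc] at hi
  have hyi : y ≠ (i : ℕ) + 1 := by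
    intro hc; simp [hc, hxi] at hi
  have hzi : z ≠ (i : ℕ) + 1 := by
    intro hc; simp [hc, hxi] at hi
  -- for j < i, y ≠ j+1 and z ≠ j+1
  have key : ∀ t : ℕ, 1 ≤ t → t ≤ r → t ≠ (i:ℕ)+1 →
      (∀ j : Fin r, j < i → t ≠ (j:ℕ)+1) → x < t := by
    intro t h1 h2 h3 h4
    rw [hxi]
    by_contra hle
    push_neg at hle
    have ht : t - 1 < r := by omega
    have hlt : (⟨t-1, ht⟩ : Fin r) < i := by
      rw [Fin.lt_def]
      show t - 1 < (i : ℕ)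
      omega
    have := h4 ⟨t-1, ht⟩ hlt
    simp only [Fin.val_mk] at this
    omega
  have hyj : ∀ j : Fin r, j < i → y ≠ (j:ℕ)+1 := by
    intro j hj'
    intro hc
    have := hj j hj'
    have hxj : x ≠ (j:ℕ)+1 := by rw [hxi]; intro hc'; omega
    simp [hc, hxj] at this
  have hzj : ∀ j : Fin r, j < i → z ≠ (j:ℕ)+1 := by
    intro j hj'
    intro hc
    have := hj j hj'
    have hxj : x ≠ (j:ℕ)+1 := by rw [hxi]; intro hc'; omega
    simp [hc, hxj] at this
  have hy1 : x < y := key y (hrank _).1 (hrank _).2 hyi hyj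
  have hz1 : x < z := key z (hrank _).1 (hrank _).2 hzi hzj
  have hxr : x < r := lt_of_lt_of_le hy1 (hrank (a, b')).2
  rw [hw, hw, hw]
  simp only [← hx, ← hy, ← hz]
  have hb : ∀ t : ℕ, x < t → t ≤ r → 2 ^ (r - t + 1) - 1 ≤ 2 ^ (r - x) - 1 := by
    intro t h1 h2
    have : r - t + 1 ≤ r - x := by omega
    exact Nat.sub_le_sub_right (Nat.pow_le_pow_right (by norm_num) this) 1
  have h1 := hb y hy1 (hrank _).2
  have h2 := hb z hz1 (hrank _).2
  have hp : 2 ^ (r - x + 1) = 2 ^ (r - x) + 2 ^ (r - x) := by ring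
  have hpos : 1 ≤ 2 ^ (r - x) := Nat.one_le_two_pow
  omega
end
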